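/- For every n ∈ ℕ₊ and every integer w ≥ m, the γ_θ-measure of the set where the n-th digit is at least w equals γ_θ({x ∈ Ω : a_n(x) ≥ w}) = log(1 + 1/w) / log(1 + θ²). -/

import Mathlib

/-!
For `w ≥ 1`, `a_n(x) ≥ w` says exactly that `T_θ^{n-1} x ∈ (0, 1/(wθ)]`. As `γ_θ` is
`T_θ`-invariant and `Ω` has full measure, the answer is `γ_θ((0, 1/(wθ)]) = G(1/(wθ))` for the
distribution function `G(y) = log(1 + θy) / log(1 + θ²)`; here `w ≥ m` ensures `1/(wθ) ≤ θ`.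
Invariance is checked on the sets `[0, c]`: `T_θ⁻¹[0, c]` is the disjoint union over the digits
`k ≥ m` of the intervals `[1/(kθ + c), 1/(kθ)]`, whose measures telescope to `G(c)` because
`mθ² = 1`.
-/

noncomputable section
open MeasureTheory Filter Set

namespace Theta

/-- θ = 1/√m -/
def th (m : ℕ) : ℝ := 1 / Real.sqrt m

/-- The θ-expansion map T_θ on [0,θ]. -/
def T (m : ℕ) (x : ℝ) : ℝ := if x = 0 then 0 else 1 / x - th m * ⌊1 / (x * th m)⌋₊

/-- The n-th digit a_n(x) (n ≥ 1), a_n(x) = a_1(T_θ^{n-1} x) with a_1(x) = ⌊1/(xθ)⌋. -/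
def a (m n : ℕ) (x : ℝ) : ℕ := ⌊1 / ((T m)^[n - 1] x * th m)⌋₊

/-- Ω: the irrationals in (0,θ). -/
def Omega (m : ℕ) : Set ℝ := {x | x ∈ Set.Ioo 0 (th m) ∧ Irrational x}

/-- Convergent numerators, shifted: `p m x (n+1)` is p_n(x), `p m x 0` is p_{-1} = 1. -/
def p (m : ℕ) (x : ℝ) : ℕ → ℝ
  | 0 => 1
  | 1 => 0
  | n + 2 => (a m (n + 1) x) * th m * p m x (n + 1) + p m x n

/-- Convergent denominators, shifted: `q m x (n+1)` is q_n(x), `q m x 0` is q_{-1} = 0. -/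
def q (m : ℕ) (x : ℝ) : ℕ → ℝ
  | 0 => 0
  | 1 => 1
  | n + 2 => (a m (n + 1) x) * th m * q m x (n + 1) + q m x n

/-- The invariant probability measure γ_θ, with density θ/((1+θx)·log(1+θ²))
with respect to Lebesgue measure on [0,θ]. -/
def gam (m : ℕ) : Measure ℝ :=
  (volume.restrict (Set.Icc 0 (th m))).withDensity
    fun x => ENNReal.ofReal (th m / ((1 + th m * x) * Real.log (1 + th m ^ 2)))

open Function Topology

variable {m : ℕ}

lemma th_pos (hm : 0 < m) : 0 < th m :=
  one_div_pos.2 (Real.sqrt_pos.2 (Nat.cast_pos.2 hm))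

lemma natCast_mul_th_sq (hm : 0 < m) : (m : ℝ) * th m ^ 2 = 1 := by
  rw [th, div_pow, one_pow, Real.sq_sqrt (Nat.cast_nonneg m)]
  field_simp

lemma one_div_natCast_mul_th_le {k : ℕ} (hm : 0 < m) (hk : m ≤ k) : 1 / (k * th m) ≤ th m := by
  have hθ := th_pos hm
  have hmk : (m : ℝ) ≤ k := Nat.cast_le.2 hk
  have hk0 : (0 : ℝ) < k := Nat.cast_pos.2 (hm.trans_le hk)
  rw [div_le_iff₀ (by positivity)]
  nlinarith [natCast_mul_th_sq hm]

lemma log_one_add_th_sq_pos (hm : 0 < m) : 0 < Real.log (1 + th m ^ 2) :=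
  Real.log_pos (lt_add_of_pos_right 1 (pow_pos (th_pos hm) 2))

def gamCdf (m : ℕ) (y : ℝ) : ℝ := Real.log (1 + th m * y) / Real.log (1 + th m ^ 2)

lemma gamCdf_zero : gamCdf m 0 = 0 := by simp [gamCdf]

lemma hasDerivAt_gamCdf (hm : 0 < m) {x : ℝ} (hx : 0 ≤ x) :
    HasDerivAt (gamCdf m) (th m / ((1 + th m * x) * Real.log (1 + th m ^ 2))) x := by
  have hpos : 0 < 1 + th m * x := by nlinarith [th_pos hm]
  have hlin : HasDerivAt (fun y => 1 + th m * y) (th m) x := by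
    simpa using ((hasDerivAt_id x).const_mul (th m)).const_add 1
  have hlog := ((Real.hasDerivAt_log hpos.ne').comp x hlin).div_const (Real.log (1 + th m ^ 2))
  exact hlog.congr_deriv (by rw [inv_mul_eq_div, div_div])

lemma continuousOn_gam_density (hm : 0 < m) :
    ContinuousOn (fun x => th m / ((1 + th m * x) * Real.log (1 + th m ^ 2))) (Ici 0) := by
  refine continuousOn_const.div (by fun_prop) fun x (hx : 0 ≤ x) => ?_
  have : 0 < 1 + th m * x := by nlinarith [th_pos hm]
  exact (mul_pos this (log_one_add_th_sq_pos hm)).ne'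

lemma gam_Ioc (hm : 0 < m) {a b : ℝ} (ha : 0 ≤ a) (hab : a ≤ b) (hb : b ≤ th m) :
    gam m (Ioc a b) = ENNReal.ofReal (gamCdf m b - gamCdf m a) := by
  have hsub : Ioc a b ⊆ Icc 0 (th m) := fun x hx => ⟨ha.trans hx.1.le, hx.2.trans hb⟩
  have hcont := (continuousOn_gam_density hm).mono (Icc_subset_Ici_iff hab |>.2 ha)
  rw [gam, withDensity_apply _ measurableSet_Ioc, Measure.restrict_restrict measurableSet_Ioc,
    inter_eq_left.2 hsub, ← ofReal_integral_eq_lintegral_ofReal,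
    ← intervalIntegral.integral_of_le hab, intervalIntegral.integral_eq_sub_of_hasDerivAt]
  · intro x hx
    exact hasDerivAt_gamCdf hm (ha.trans (uIcc_of_le hab ▸ hx).1)
  · exact (uIcc_of_le hab ▸ hcont).intervalIntegrable
  · exact hcont.integrableOn_Icc.mono_set Ioc_subset_Icc_self
  · refine (ae_restrict_iff' measurableSet_Ioc).2 (Eventually.of_forall fun x hx => ?_)
    have : 0 < 1 + th m * x := by nlinarith [th_pos hm, hx.1]
    exact div_nonneg (th_pos hm).le (mul_pos this (log_one_add_th_sq_pos hm)).le

instance : NullSingletonClass (gam m) := by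
  unfold gam; infer_instance

lemma gam_Icc (hm : 0 < m) {a b : ℝ} (ha : 0 ≤ a) (hab : a ≤ b) (hb : b ≤ th m) :
    gam m (Icc a b) = ENNReal.ofReal (gamCdf m b - gamCdf m a) := by
  rw [← measure_congr Ioc_ae_eq_Icc, gam_Ioc hm ha hab hb]

lemma gam_eq_zero_of_inter_Icc (s : Set ℝ) (hs : volume (s ∩ Icc 0 (th m)) = 0) :
    gam m s = 0 := by
  refine withDensity_absolutelyContinuous _ _ ?_
  rwa [Measure.restrict_apply' measurableSet_Icc]

lemma gam_inter_Ioc (s : Set ℝ) : gam m (s ∩ Ioc 0 (th m)) = gam m s := by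
  refine measure_inter_conull <|
    gam_eq_zero_of_inter_Icc _ (measure_mono_null ?_ (measure_singleton 0))
  rintro x ⟨hx, hx0, hxθ⟩
  exact le_antisymm (not_lt.1 fun h => hx ⟨h, hxθ⟩) hx0

lemma gam_compl_Omega : gam m (Omega m)ᶜ = 0 := by
  have hnull : volume ({0, th m} ∪ range ((↑) : ℚ → ℝ)) = 0 :=
    ((countable_singleton (th m)).insert 0 |>.union (countable_range _)).measure_zero volume
  refine gam_eq_zero_of_inter_Icc _ (measure_mono_null ?_ hnull)
  rintro x ⟨hx, hx0, hxθ⟩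
  by_cases hirr : Irrational x
  · refine Or.inl ?_
    rcases hx0.eq_or_lt with h | h
    · exact Or.inl h.symm
    · exact Or.inr (hxθ.antisymm (not_lt.1 fun h' => hx ⟨⟨h, h'⟩, hirr⟩))
  · exact Or.inr (not_not.1 hirr)

lemma isProbabilityMeasure_gam (hm : 0 < m) : IsProbabilityMeasure (gam m) := by
  refine ⟨?_⟩
  rw [← gam_inter_Ioc, univ_inter, gam_Ioc hm le_rfl (th_pos hm).le le_rfl, gamCdf_zero, sub_zero,
    gamCdf, ← sq, div_self (log_one_add_th_sq_pos hm).ne', ENNReal.ofReal_one]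

lemma measurable_T : Measurable (T m) := by
  unfold T
  exact Measurable.ite measurableSet_eq measurable_const (by fun_prop)

lemma T_eq_mul_sub_floor {x : ℝ} (hx : x ≠ 0) (hθ : th m ≠ 0) :
    T m x = th m * (1 / (x * th m) - ⌊1 / (x * th m)⌋₊) := by
  rw [T, if_neg hx]
  field_simp

lemma T_mem_Ico (hm : 0 < m) {x : ℝ} (hx : 0 < x) : T m x ∈ Ico 0 (th m) := by
  have hθ := th_pos hm
  have hy : 0 ≤ 1 / (x * th m) := by positivity
  rw [T_eq_mul_sub_floor hx.ne' hθ.ne']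
  exact ⟨mul_nonneg hθ.le (sub_nonneg.2 (Nat.floor_le hy)),
    mul_lt_of_lt_one_right hθ (sub_lt_iff_lt_add'.2 (Nat.lt_floor_add_one _))⟩

/-- For `0 ≤ c < θ` this is `{x | ⌊1/(xθ)⌋ = k ∧ T_θ x ≤ c}`. -/
def branchIic (m k : ℕ) (c : ℝ) : Set ℝ := Icc (1 / (k * th m + c)) (1 / (k * th m))

lemma floor_eq_of_mem_branchIic {k : ℕ} {c x : ℝ} (hk : 0 < k) (hc : c ∈ Ico 0 (th m))
    (hx : x ∈ branchIic m k c) : ⌊1 / (x * th m)⌋₊ = k := by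
  have hθ : 0 < th m := hc.1.trans_lt hc.2
  have hkθ : 0 < (k : ℝ) * th m := mul_pos (Nat.cast_pos.2 hk) hθ
  have hlow : 1 ≤ x * (k * th m + c) := (div_le_iff₀ (by linarith [hc.1])).1 hx.1
  have hupp : x * (k * th m) ≤ 1 := (le_div_iff₀ hkθ).1 hx.2
  have hx0 : 0 < x := (one_div_pos.2 (by linarith [hc.1])).trans_le hx.1
  rw [Nat.floor_eq_iff (by positivity), le_div_iff₀ (by positivity), div_lt_iff₀ (by positivity)]
  constructor <;> nlinarith [hc.2]

lemma preimage_Iic_inter_Ioc (hm : 0 < m) {c : ℝ} (hc : c ∈ Ico 0 (th m)) :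
    T m ⁻¹' Iic c ∩ Ioc 0 (th m) = ⋃ i : ℕ, branchIic m (i + m) c := by
  have hθ := th_pos hm
  ext x
  simp only [mem_inter_iff, mem_preimage, mem_Iic, mem_iUnion]
  constructor
  · rintro ⟨hTx, hx0, hxθ⟩
    set k := ⌊1 / (x * th m)⌋₊ with hk
    have hmk : m ≤ k := Nat.le_floor <| by
      rw [le_div_iff₀ (by positivity)]; nlinarith [natCast_mul_th_sq hm]
    have hkx : (k : ℝ) * (x * th m) ≤ 1 :=
      (le_div_iff₀ (by positivity)).1 (Nat.floor_le (by positivity))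
    rw [T, if_neg hx0.ne', ← hk, sub_le_iff_le_add, div_le_iff₀ hx0] at hTx
    have hkθ : 0 < (k : ℝ) * th m := mul_pos (Nat.cast_pos.2 (hm.trans_le hmk)) hθ
    refine ⟨k - m, ?_⟩
    rw [Nat.sub_add_cancel hmk, branchIic, mem_Icc, div_le_iff₀ (by linarith [hc.1]),
      le_div_iff₀ hkθ]
    constructor <;> nlinarith
  · rintro ⟨i, hx⟩
    have hk : 0 < i + m := by omega
    have hkθ : 0 < ((i + m : ℕ) : ℝ) * th m := mul_pos (Nat.cast_pos.2 hk) hθ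
    have hx0 : 0 < x := (one_div_pos.2 (by linarith [hc.1])).trans_le hx.1
    have hfloor := floor_eq_of_mem_branchIic hk hc hx
    refine ⟨?_, hx0, hx.2.trans (one_div_natCast_mul_th_le hm (by omega))⟩
    rw [T, if_neg hx0.ne', hfloor, sub_le_iff_le_add, div_le_iff₀ hx0]
    nlinarith [(div_le_iff₀ (by linarith [hc.1])).1 hx.1]

lemma gam_branchIic (hm : 0 < m) {k : ℕ} {c : ℝ} (hk : m ≤ k) (hc : 0 ≤ c) :
    gam m (branchIic m k c)
      = ENNReal.ofReal (gamCdf m (1 / (k * th m)) - gamCdf m (1 / (k * th m + c))) := by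
  have hkθ : 0 < (k : ℝ) * th m := mul_pos (Nat.cast_pos.2 (hm.trans_le hk)) (th_pos hm)
  exact gam_Icc hm (by positivity) (one_div_le_one_div_of_le hkθ (by linarith))
    (one_div_natCast_mul_th_le hm hk)

lemma gamCdf_sub_gamCdf (hm : 0 < m) {t c : ℝ} (ht : 0 < t) (hc : 0 ≤ c) :
    gamCdf m (1 / (t * th m)) - gamCdf m (1 / (t * th m + c))
      = (Real.log (th m + c / t) - Real.log (th m + c / (t + 1))) / Real.log (1 + th m ^ 2) := by
  have hθ := th_pos hm
  rw [gamCdf, gamCdf, ← sub_div, ← Real.log_div (by positivity) (by positivity),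
    ← Real.log_div (by positivity) (by positivity)]
  congr 2
  field_simp
  ring

lemma tsum_ofReal_sub_succ {f : ℕ → ℝ} {l : ℝ} (hf : Antitone f) (hl : Tendsto f atTop (𝓝 l)) :
    ∑' n, ENNReal.ofReal (f n - f (n + 1)) = ENNReal.ofReal (f 0 - l) := by
  have hnonneg : ∀ n, 0 ≤ f n - f (n + 1) := fun n => sub_nonneg.2 (hf n.le_succ)
  have hsum : HasSum (fun n => f n - f (n + 1)) (f 0 - l) :=
    (hasSum_iff_tendsto_nat_of_nonneg hnonneg _).2 <|
      (tendsto_const_nhds.sub hl).congr fun n => (Finset.sum_range_sub' f n).symm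
  rw [← ENNReal.ofReal_tsum_of_nonneg hnonneg hsum.summable, hsum.tsum_eq]

lemma antitone_log_add_div {θ c : ℝ} (hθ : 0 < θ) (hc : 0 ≤ c) (hm : 0 < m) :
    Antitone fun i : ℕ => Real.log (θ + c / (i + m : ℕ)) := fun i j hij => by
  have hk : ∀ i : ℕ, (0 : ℝ) < (i + m : ℕ) := fun i => Nat.cast_pos.2 (by omega)
  refine Real.log_le_log (by positivity) (add_le_add_right ?_ θ)
  exact div_le_div_of_nonneg_left hc (hk i) (by exact_mod_cast (by omega : i + m ≤ j + m))

lemma tendsto_log_add_div {θ : ℝ} (hθ : 0 < θ) (c : ℝ) (m : ℕ) :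
    Tendsto (fun i : ℕ => Real.log (θ + c / (i + m : ℕ))) atTop (𝓝 (Real.log θ)) := by
  have h0 : Tendsto (fun i : ℕ => c / (i + m : ℕ)) atTop (𝓝 0) :=
    (tendsto_const_div_atTop_nhds_zero_nat c).comp (tendsto_add_atTop_nat m)
  have h1 : Tendsto (fun i : ℕ => θ + c / (i + m : ℕ)) atTop (𝓝 θ) := by
    simpa using (tendsto_const_nhds (x := θ)).add h0
  exact (Real.continuousAt_log hθ.ne').tendsto.comp h1

lemma log_th_add_div_sub_log_th (hm : 0 < m) {c : ℝ} (hc : 0 ≤ c) :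
    Real.log (th m + c / m) - Real.log (th m) = Real.log (1 + th m * c) := by
  have hθ := th_pos hm
  have hmθ : c / m = th m * (th m * c) := by
    rw [div_eq_iff (Nat.cast_pos.2 hm).ne']
    linear_combination (-c) * natCast_mul_th_sq hm
  rw [hmθ, ← Real.log_div (by positivity) hθ.ne']
  congr 1
  field_simp

lemma gam_preimage_Iic_of_mem (hm : 0 < m) {c : ℝ} (hc : c ∈ Ico 0 (th m)) :
    gam m (T m ⁻¹' Iic c) = ENNReal.ofReal (gamCdf m c) := by
  have hL := log_one_add_th_sq_pos hm
  set g : ℕ → ℝ := fun i => Real.log (th m + c / (i + m : ℕ))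
  have hdisj : Pairwise (Disjoint on fun i => branchIic m (i + m) c) := fun i j hij =>
    disjoint_left.2 fun x hxi hxj => hij <| by
      have := (floor_eq_of_mem_branchIic (k := i + m) (by omega) hc hxi).symm.trans
        (floor_eq_of_mem_branchIic (k := j + m) (by omega) hc hxj)
      omega
  have hterm : ∀ i, gam m (branchIic m (i + m) c)
      = ENNReal.ofReal (g i / Real.log (1 + th m ^ 2) - g (i + 1) / Real.log (1 + th m ^ 2)) := by
    intro i
    rw [gam_branchIic hm (by omega) hc.1, gamCdf_sub_gamCdf hm (Nat.cast_pos.2 (by omega)) hc.1,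
      sub_div]
    simp only [g]
    push_cast
    ring_nf
  have hg := antitone_log_add_div (th_pos hm) hc.1 hm
  rw [← gam_inter_Ioc, preimage_Iic_inter_Ioc hm hc,
    measure_iUnion hdisj fun _ => measurableSet_Icc, tsum_congr hterm,
    tsum_ofReal_sub_succ (fun i j hij => div_le_div_of_nonneg_right (hg hij) hL.le)
      ((tendsto_log_add_div (th_pos hm) c m).div_const _),
    ← sub_div]
  simp only [zero_add]
  rw [log_th_add_div_sub_log_th hm hc.1, gamCdf]

lemma gam_preimage_Iic (hm : 0 < m) (c : ℝ) : gam m (T m ⁻¹' Iic c) = gam m (Iic c) := by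
  by_cases hc : c ∈ Ico 0 (th m)
  · rw [gam_preimage_Iic_of_mem hm hc, ← gam_inter_Ioc (Iic c), Iic_inter_Ioc_of_le hc.2.le,
      gam_Ioc hm le_rfl hc.1 hc.2.le, gamCdf_zero, sub_zero]
  · have hiff : ∀ x ∈ Ioc 0 (th m), T m x ≤ c ↔ x ≤ c := fun x hx => by
      have hT := T_mem_Ico hm hx.1
      simp only [mem_Ico, not_and_or, not_le, not_lt] at hc
      rcases hc with hc | hc
      · exact iff_of_false (by linarith [hT.1]) (by linarith [hx.1])
      · exact iff_of_true (by linarith [hT.2]) (by linarith [hx.2])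
    rw [← gam_inter_Ioc, ← gam_inter_Ioc (Iic c)]
    congr 1
    ext x
    exact and_congr_left (hiff x)

lemma measurePreserving_T (hm : 0 < m) : MeasurePreserving (T m) (gam m) (gam m) := by
  have := isProbabilityMeasure_gam hm
  refine ⟨measurable_T, Measure.ext_of_Iic _ _ fun c => ?_⟩
  rw [Measure.map_apply measurable_T measurableSet_Iic, gam_preimage_Iic hm]

lemma le_floor_one_div_mul_iff {w : ℕ} {θ y : ℝ} (hw : 0 < w) (hθ : 0 < θ) :
    w ≤ ⌊1 / (y * θ)⌋₊ ↔ y ∈ Ioc 0 (1 / (w * θ)) := by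
  have hwθ : 0 < (w : ℝ) * θ := mul_pos (Nat.cast_pos.2 hw) hθ
  rw [Nat.le_floor_iff' hw.ne', mem_Ioc, le_div_iff₀ hwθ]
  constructor
  · intro h
    have hy : 0 < y := by
      by_contra! hy
      have : 1 / (y * θ) ≤ 0 := one_div_nonpos.2 (mul_nonpos_of_nonpos_of_nonneg hy hθ.le)
      linarith [(Nat.cast_pos (α := ℝ)).2 hw]
    refine ⟨hy, ?_⟩
    have := (le_div_iff₀ (mul_pos hy hθ)).1 h
    linarith
  · rintro ⟨hy, h⟩
    rw [le_div_iff₀ (mul_pos hy hθ)]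
    linarith

theorem stmt_12_general (m : ℕ) (hm : 2 ≤ m) (n : ℕ) (w : ℕ) (hw : m ≤ w) :
    gam m {x | x ∈ Omega m ∧ w ≤ a m n x}
      = ENNReal.ofReal (Real.log (1 + 1 / (w : ℝ)) / Real.log (1 + th m ^ 2)) := by
  have hm0 : 0 < m := by omega
  have hθ := th_pos hm0
  have hw0 : (0 : ℝ) < w := Nat.cast_pos.2 (by omega)
  have hset : {x | x ∈ Omega m ∧ w ≤ a m n x}
      = (T m)^[n - 1] ⁻¹' Ioc 0 (1 / (w * th m)) ∩ Omega m := by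
    ext x
    rw [mem_ofPred_eq, mem_inter_iff, and_comm, a, le_floor_one_div_mul_iff (by omega) hθ,
      mem_preimage]
  rw [hset, measure_inter_conull gam_compl_Omega,
    ((measurePreserving_T hm0).iterate _).measure_preimage measurableSet_Ioc.nullMeasurableSet,
    gam_Ioc hm0 le_rfl (by positivity) (one_div_natCast_mul_th_le hm0 hw), gamCdf_zero, sub_zero,
    gamCdf]
  congr 3
  field_simp

/-- γ_θ({x ∈ Ω : a_n(x) ≥ w}) = log(1 + 1/w)/log(1 + θ²). -/
theorem stmt_12 (m : ℕ) (hm : 2 ≤ m) (n : ℕ) (hn : 1 ≤ n) (w : ℕ) (hw : m ≤ w) :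
    gam m {x | x ∈ Omega m ∧ w ≤ a m n x}
      = ENNReal.ofReal (Real.log (1 + 1 / (w : ℝ)) / Real.log (1 + th m ^ 2)) :=
  stmt_12_general m hm n w hw
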